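/- arXiv:1312.3072 — 2 statements merged into one kernel-verified Lean document; each statement's English description precedes it below -/
import Mathlib

section
/- If the Gallai graph Γ(G) of a graph G is a tree, then G is claw-free and chordal. -/
open SimpleGraph

/-- The Gallai graph of `G`: vertices are the edges of `G`; two distinct edges are
adjacent iff they share an endpoint but do not span a triangle in `G`. -/
def SimpleGraph.gallai {V : Type*} (G : SimpleGraph V) : SimpleGraph G.edgeSet where
  Adj e f := e ≠ f ∧ ∃ a b c : V, (e : Sym2 V) = s(a, b) ∧ (f : Sym2 V) = s(a, c) ∧ ¬ G.Adj b c
  symm := ⟨by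
    rintro e f ⟨hne, a, b, c, he, hf, h⟩
    exact ⟨hne.symm, a, c, b, hf, he, fun h' => h h'.symm⟩⟩
  loopless := ⟨fun e h => h.1 rfl⟩

/-- The line graph of `G`: vertices are the edges of `G`; two distinct edges are
adjacent iff they share an endpoint. -/
def SimpleGraph.lineGraph' {V : Type*} (G : SimpleGraph V) : SimpleGraph G.edgeSet where
  Adj e f := e ≠ f ∧ ∃ a : V, a ∈ (e : Sym2 V) ∧ a ∈ (f : Sym2 V)
  symm := ⟨by rintro e f ⟨hne, a, h1, h2⟩; exact ⟨hne.symm, a, h2, h1⟩⟩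
  loopless := ⟨fun e h => h.1 rfl⟩

/-- `G` contains an induced copy of `H`. -/
def HasInducedCopy {α V : Type*} (H : SimpleGraph α) (G : SimpleGraph V) : Prop :=
  ∃ f : α ↪ V, ∀ a b : α, H.Adj a b ↔ G.Adj (f a) (f b)

/-- A graph is chordal if it has no induced cycle of length at least 4. -/
def SimpleGraph.Chordal {V : Type*} (G : SimpleGraph V) : Prop :=
  ∀ n : ℕ, 4 ≤ n → ¬ HasInducedCopy (SimpleGraph.cycleGraph n) G

/-- The graph on `Fin n` with the given list of edges. -/
def graphOfList (n : ℕ) (l : List (Fin n × Fin n)) : SimpleGraph (Fin n) :=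
  SimpleGraph.fromRel (fun i j => (i, j) ∈ l)

/-- `F₁`, the claw `K_{1,3}`. -/
def F1 : SimpleGraph (Fin 4) := graphOfList 4 [(0,3),(1,3),(2,3)]

/-- `F₂`, the bowtie: two triangles sharing one vertex. -/
def F2 : SimpleGraph (Fin 5) := graphOfList 5 [(0,1),(0,4),(1,4),(2,3),(2,4),(3,4)]

/-- `F₃`, the octahedron `K_{2,2,2}`. -/
def F3 : SimpleGraph (Fin 6) := SimpleGraph.fromRel (fun i j => (i.val + 3) % 6 ≠ j.val)

/-- `F₄`: a path `0-1-2-3`, a vertex `4` adjacent to `1,2`, and a pendant `5` adjacent to `4`. -/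
def F4 : SimpleGraph (Fin 6) := graphOfList 6 [(0,1),(1,2),(2,3),(1,4),(2,4),(4,5)]

/-- `F₅`: the gem on `{0,1,2,3,4}` (path `0-3-4-2` dominated by `1`) plus vertex `5`
adjacent to the two top vertices `3,4`. -/
def F5 : SimpleGraph (Fin 6) :=
  graphOfList 6 [(0,1),(1,2),(2,4),(4,5),(5,3),(3,0),(1,3),(3,4),(4,1)]

/-- `F₆`: a path `0-1-2-3-4` plus a vertex `5` adjacent to the internal vertices `1,2,3`. -/
def F6 : SimpleGraph (Fin 6) := graphOfList 6 [(0,1),(1,2),(2,3),(3,4),(1,5),(2,5),(3,5)]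

/-- `F₇`: a path `0-1-2-3-4-5` plus a vertex `6` adjacent to the internal vertices `1,2,3,4`. -/
def F7 : SimpleGraph (Fin 7) :=
  graphOfList 7 [(0,1),(1,2),(2,3),(3,4),(4,5),(1,6),(2,6),(3,6),(4,6)]

/-- `F₈`: a path `0-1-2-3`, vertices `4` adjacent to `0,1`, `5` adjacent to `1,2`,
`6` adjacent to `2,3`, and the path `4-5-6`. -/
def F8 : SimpleGraph (Fin 7) :=
  graphOfList 7 [(0,1),(1,2),(2,3),(3,6),(6,5),(5,4),(4,0),(4,1),(1,5),(5,2),(2,6)]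

/-- `F₉`: vertices `x₁,x₂,x₃ = 0,1,2`, `y₁,y₂,y₃ = 3,4,5`, `z = 6`. -/
def F9 : SimpleGraph (Fin 7) :=
  graphOfList 7 [(0,1),(1,2),(3,4),(4,5),(0,3),(1,3),(1,4),(2,4),(2,5),(1,6),(2,6),(3,6),(4,6)]

/-- `F₈⁻`: the 6-cycle `a b e f c d = 0 1 2 3 4 5` with chords `db, bc, ce`. -/
def F8minus : SimpleGraph (Fin 6) :=
  graphOfList 6 [(0,1),(1,2),(2,3),(3,4),(4,5),(5,0),(5,1),(1,4),(4,2)]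

/-- The gem: the path `0-1-2-3` plus a dominating vertex `4`. -/
def gemGraph : SimpleGraph (Fin 5) :=
  graphOfList 5 [(0,1),(1,2),(2,3),(0,4),(1,4),(2,4),(3,4)]

/-- The diamond `K₄` minus one edge. -/
def diamondGraph : SimpleGraph (Fin 4) := graphOfList 4 [(0,1),(0,2),(0,3),(1,2),(1,3)]

/-- A set `U` is homogeneous in `G` if every vertex outside `U` is adjacent to all of
`U` or to none of `U`. -/
def SimpleGraph.Homogeneous {V : Type*} (G : SimpleGraph V) (U : Set V) : Prop :=
  ∀ v ∉ U, (∀ u ∈ U, G.Adj v u) ∨ (∀ u ∈ U, ¬ G.Adj v u)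

/-- A set of vertices is independent if no two of its vertices are adjacent. -/
def SimpleGraph.IndepSet {V : Type*} (G : SimpleGraph V) (U : Set V) : Prop :=
  ∀ u ∈ U, ∀ w ∈ U, ¬ G.Adj u w

/-- `v` is a cut-vertex of `G`: its removal separates two vertices that were reachable. -/
def SimpleGraph.IsCutVertex {V : Type*} (G : SimpleGraph V) (v : V) : Prop :=
  ∃ (x y : V) (hx : x ≠ v) (hy : y ≠ v), G.Reachable x y ∧
    ¬ (G.induce {u : V | u ≠ v}).Reachable ⟨x, hx⟩ ⟨y, hy⟩

/-- A block of `G`: a maximal set of vertices inducing a connected subgraph without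
a cut-vertex. -/
def SimpleGraph.IsBlock {V : Type*} (G : SimpleGraph V) (B : Set V) : Prop :=
  (G.induce B).Connected ∧ (∀ v, ¬ (G.induce B).IsCutVertex v) ∧
    ∀ C : Set V, B ⊆ C → (G.induce C).Connected → (∀ v, ¬ (G.induce C).IsCutVertex v) → B = C

/-! Two edges `ab` and `bc` of `G` are adjacent in `Γ(G)` as soon as `a` and `c` are distinct and
non-adjacent. Hence the three edges of an induced claw span a triangle of `Γ(G)`, and the
consecutive edges of an induced cycle of length `n ≥ 4` span an `n`-cycle of `Γ(G)`. -/

namespace SimpleGraph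

variable {V : Type*} {G : SimpleGraph V}

theorem gallai_adj_of_adj_of_adj {a b c : V} (hab : G.Adj a b) (hbc : G.Adj b c) (hac : a ≠ c)
    (hnac : ¬ G.Adj a c) : G.gallai.Adj ⟨s(a, b), hab⟩ ⟨s(b, c), hbc⟩ := by
  refine ⟨fun h => ?_, b, a, c, Sym2.eq_swap, rfl, hnac⟩
  rcases Sym2.eq_iff.mp (congrArg Subtype.val h) with ⟨rfl, -⟩ | ⟨rfl, -⟩
  exacts [G.loopless.irrefl _ hab, hac rfl]

theorem not_isAcyclic_gallai_of_hasInducedCopy_claw (h : HasInducedCopy F1 G) :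
    ¬ G.gallai.IsAcyclic := by
  obtain ⟨f, hf⟩ := h
  have hleaf : ∀ i : Fin 3, F1.Adj i.castSucc (Fin.last 3) := by
    simp only [F1, graphOfList, fromRel_adj]; decide
  have hindep : ∀ i j : Fin 3, ¬ F1.Adj i.castSucc j.castSucc := by
    simp only [F1, graphOfList, fromRel_adj]; decide
  have hspoke : ∀ i : Fin 3, G.Adj (f i.castSucc) (f (Fin.last 3)) := fun i =>
    (hf _ _).mp (hleaf i)
  let e : Fin 3 → G.edgeSet := fun i => ⟨s(f i.castSucc, f (Fin.last 3)), hspoke i⟩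
  have he : Function.Injective e := fun i j hij => by
    simpa using f.injective (Sym2.congr_left.mp (congrArg Subtype.val hij))
  let triangle : completeGraph (Fin 3) →g G.gallai :=
    ⟨e, fun {i j} hij => by
      convert gallai_adj_of_adj_of_adj (hspoke i) (hspoke j).symm
        (f.injective.ne (Fin.castSucc_injective _ |>.ne hij)) (by rw [← hf]; exact hindep i j)
        using 2
      exact Subtype.ext Sym2.eq_swap⟩
  exact fun hac => (not_cliqueFree_iff_top_isContained 3).mpr ⟨triangle.toCopy he⟩
    (hac.cliqueFree le_rfl)

open Fin.CommRing in
theorem not_isAcyclic_gallai_of_hasInducedCopy_cycleGraph {n : ℕ} (hn : 4 ≤ n)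
    (h : HasInducedCopy (cycleGraph n) G) : ¬ G.gallai.IsAcyclic := by
  obtain ⟨m, rfl⟩ : ∃ m, n = m + 4 := ⟨n - 4, by omega⟩
  obtain ⟨f, hf⟩ := h
  have hstep : ∀ i : Fin (m + 4), G.Adj (f i) (f (i + 1)) := fun i =>
    (hf _ _).mp (cycleGraph_adj.mpr (Or.inr (add_sub_cancel_left i 1)))
  have htwo : (2 : Fin (m + 4)) ≠ 0 := by simp [Fin.ext_iff, Nat.mod_eq_of_lt]
  have hthree : (3 : Fin (m + 4)) ≠ 0 := by simp [Fin.ext_iff, Nat.mod_eq_of_lt]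
  have hchord : ∀ i : Fin (m + 4), ¬ G.Adj (f i) (f (i + 1 + 1)) := by
    intro i hadj
    rcases cycleGraph_adj.mp ((hf _ _).mpr hadj) with h | h
    · exact hthree (by linear_combination -h)
    · exact one_ne_zero (by linear_combination h)
  let e : Fin (m + 4) → G.edgeSet := fun i => ⟨s(f i, f (i + 1)), hstep i⟩
  have he : Function.Injective e := fun i j hij => by
    rcases Sym2.eq_iff.mp (congrArg Subtype.val hij) with ⟨h, -⟩ | ⟨h₁, h₂⟩
    · exact f.injective h
    · have h₁ := f.injective h₁
      have h₂ := f.injective h₂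
      exact absurd (by linear_combination h₂ - h₁) htwo
  have hconsec : ∀ i, G.gallai.Adj (e i) (e (i + 1)) := fun i =>
    gallai_adj_of_adj_of_adj (hstep i) (hstep (i + 1))
      (f.injective.ne fun h => htwo (by linear_combination -h)) (hchord i)
  let cycle : cycleGraph (m + 4) →g G.gallai :=
    ⟨e, fun {i j} hij => by
      rcases cycleGraph_adj.mp hij with h | h
      · rw [sub_eq_iff_eq_add'.mp h]; exact (hconsec j).symm
      · rw [sub_eq_iff_eq_add'.mp h]; exact hconsec i⟩
  exact fun hac => isAcyclic_iff_free_cycleGraph.mp hac (m + 4) (by omega) ⟨cycle.toCopy he⟩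

end SimpleGraph

/-- If `Γ(G)` is a tree, then `G` is claw-free and chordal. -/
theorem stmt_11 {V : Type*} (G : SimpleGraph V) (htree : G.gallai.IsTree) :
    ¬ HasInducedCopy F1 G ∧ G.Chordal :=
  ⟨fun h => not_isAcyclic_gallai_of_hasInducedCopy_claw h htree.isAcyclic,
    fun _ hn h => not_isAcyclic_gallai_of_hasInducedCopy_cycleGraph hn h htree.isAcyclic⟩
end

section
/- Let B be a complete block of a graph G containing three distinct cut-vertices a, b, c of G, each having a neighbor outside B. Then the Gallai graph Γ(G) contains a cycle (so Γ(G) is not a forest). -/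
open SimpleGraph

/-!
In a complete block `B`, a vertex `w ∉ B` has at most one neighbour in `B`: with two neighbours
`a ≠ x`, every vertex of `B ∪ {w}` is adjacent to `a` or to `x`, so `B ∪ {w}` is connected and has
no cut-vertex, contradicting the maximality of `B`. Hence if `a'`, `b'`, `c'` are neighbours of
`a`, `b`, `c` outside `B`, then `a'` is adjacent to neither `b` nor `c`, and so on, and the edges
`aa', ab, bb', bc, cc', ca` form a 6-cycle in `Γ(G)`: consecutive ones share an endpoint and
their other endpoints are not adjacent.
-/

namespace SimpleGraph

variable {W : Type*} {H : SimpleGraph W}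

theorem not_isAcyclic_of_isPath_of_adj {u v : W} {p : H.Walk u v} (hp : p.IsPath)
    (hadj : H.Adj u v) (hsnd : p.snd ≠ v) : ¬ H.IsAcyclic :=
  fun hH ↦ hsnd (hH.eq_snd_of_adj_start hp hadj p.end_mem_support).symm

theorem preconnected_of_forall_adj (d : W) (hd : ∀ u ≠ d, H.Adj u d) : H.Preconnected := by
  have hreach (u : W) : H.Reachable u d := by
    by_cases hu : u = d
    · exact hu ▸ Reachable.refl u
    · exact (hd u hu).reachable
  exact fun x y ↦ (hreach x).trans (hreach y).symm

theorem not_isCutVertex_of_forall_exists_adj (hdom : ∀ v, ∃ d ≠ v, ∀ u ≠ d, H.Adj u d)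
    (v : W) : ¬ H.IsCutVertex v := by
  rintro ⟨x, y, hx, hy, -, hxy⟩
  obtain ⟨d, hdv, hd⟩ := hdom v
  exact hxy <| preconnected_of_forall_adj (H := H.induce {u | u ≠ v}) ⟨d, hdv⟩
    (fun u hu ↦ hd u (fun h ↦ hu (Subtype.ext h))) _ _

variable {V : Type*} {G : SimpleGraph V} {B : Set V}

theorem IsClique.adj_of_mem_insert {w d u : V} (hB : G.IsClique B) (hd : d ∈ B)
    (hwd : G.Adj w d) (hu : u = w ∨ u ∈ B) (hud : u ≠ d) : G.Adj u d := by
  rcases hu with rfl | hu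
  · exact hwd
  · exact hB hu hd hud

theorem IsBlock.eq_of_adj_of_adj_of_notMem (hB : G.IsBlock B) (hK : G.IsClique B)
    {w a x : V} (hw : w ∉ B) (ha : a ∈ B) (hx : x ∈ B) (hwa : G.Adj w a) (hwx : G.Adj w x) :
    a = x := by
  by_contra hax
  set C := insert w B
  have hdom (v : C) : ∃ d ≠ v, ∀ u ≠ d, (G.induce C).Adj u d := by
    by_cases hva : (v : V) = a
    · refine ⟨⟨x, .inr hx⟩, fun h ↦ hax (hva ▸ congrArg Subtype.val h).symm, fun u hu ↦ ?_⟩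
      exact hK.adj_of_mem_insert hx hwx u.2 (fun h ↦ hu (Subtype.ext h))
    · refine ⟨⟨a, .inr ha⟩, fun h ↦ hva (congrArg Subtype.val h).symm, fun u hu ↦ ?_⟩
      exact hK.adj_of_mem_insert ha hwa u.2 (fun h ↦ hu (Subtype.ext h))
  have hconn : (G.induce C).Connected := by
    obtain ⟨d, -, hd⟩ := hdom ⟨w, .inl rfl⟩
    exact { preconnected := preconnected_of_forall_adj d hd, nonempty := ⟨d⟩ }
  have hBC : B = C := hB.2.2 C (Set.subset_insert w B) hconn
    (not_isCutVertex_of_forall_exists_adj hdom)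
  exact hw (hBC ▸ Set.mem_insert w B)

theorem gallai_adj_of_not_adj {e f : G.edgeSet} {a b c : V} (he : (e : Sym2 V) = s(a, b))
    (hf : (f : Sym2 V) = s(a, c)) (hbc : b ≠ c) (hnadj : ¬ G.Adj b c) : G.gallai.Adj e f :=
  ⟨fun hef ↦ hbc (Sym2.congr_right.mp (he.symm.trans (hef ▸ hf))), a, b, c, he, hf, hnadj⟩

theorem not_isAcyclic_gallai_of_triangle {a b c a' b' c' : V} (hab : G.Adj a b)
    (hbc : G.Adj b c) (hca : G.Adj c a) (haa' : G.Adj a a') (hbb' : G.Adj b b')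
    (hcc' : G.Adj c c') (ha'b : ¬ G.Adj a' b) (ha'c : ¬ G.Adj a' c) (hb'c : ¬ G.Adj b' c)
    (hb'a : ¬ G.Adj b' a) (hc'a : ¬ G.Adj c' a) (hc'b : ¬ G.Adj c' b) :
    ¬ G.gallai.IsAcyclic := by
  have ne_of_not_adj {x y z : V} (hyz : G.Adj y z) (hxz : ¬ G.Adj x z) : x ≠ y :=
    fun h ↦ hxz (h ▸ hyz)
  have ha'b_ne : a' ≠ b := ne_of_not_adj hbc ha'c
  have ha'c_ne : a' ≠ c := ne_of_not_adj hbc.symm ha'b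
  have hb'c_ne : b' ≠ c := ne_of_not_adj hca hb'a
  have hb'a_ne : b' ≠ a := ne_of_not_adj hca.symm hb'c
  have hc'a_ne : c' ≠ a := ne_of_not_adj hab hc'b
  have hc'b_ne : c' ≠ b := ne_of_not_adj hab.symm hc'a
  let eA : G.edgeSet := ⟨s(a, a'), haa'⟩
  let eAB : G.edgeSet := ⟨s(a, b), hab⟩
  let eB : G.edgeSet := ⟨s(b, b'), hbb'⟩
  let eBC : G.edgeSet := ⟨s(b, c), hbc⟩
  let eC : G.edgeSet := ⟨s(c, c'), hcc'⟩
  let eCA : G.edgeSet := ⟨s(c, a), hca⟩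
  have h1 : G.gallai.Adj eA eAB := gallai_adj_of_not_adj rfl rfl ha'b_ne ha'b
  have h2 : G.gallai.Adj eAB eB :=
    gallai_adj_of_not_adj Sym2.eq_swap rfl hb'a_ne.symm (fun h ↦ hb'a h.symm)
  have h3 : G.gallai.Adj eB eBC := gallai_adj_of_not_adj rfl rfl hb'c_ne hb'c
  have h4 : G.gallai.Adj eBC eC :=
    gallai_adj_of_not_adj Sym2.eq_swap rfl hc'b_ne.symm (fun h ↦ hc'b h.symm)
  have h5 : G.gallai.Adj eC eCA := gallai_adj_of_not_adj rfl rfl hc'a_ne hc'a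
  have h6 : G.gallai.Adj eA eCA := gallai_adj_of_not_adj rfl Sym2.eq_swap ha'c_ne ha'c
  let p := Walk.cons h1 (.cons h2 (.cons h3 (.cons h4 (.cons h5 .nil))))
  refine not_isAcyclic_of_isPath_of_adj (p := p) ?_ h6 ?_
  · simp only [p, eA, eAB, eB, eBC, eC, eCA, Walk.isPath_def, Walk.support_cons,
      Walk.support_nil, List.nodup_cons, List.mem_cons, Subtype.ext_iff, Sym2.eq_iff]
    grind [hab.ne, hbc.ne, hca.ne, haa'.ne, hbb'.ne, hcc'.ne]
  · simp [p, eAB, eCA, Subtype.ext_iff, hbc.ne, hab.ne']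

end SimpleGraph

theorem stmt_16_general {V : Type*} (G : SimpleGraph V) (B : Set V) (hB : G.IsBlock B)
    (hcomplete : ∀ u ∈ B, ∀ v ∈ B, u ≠ v → G.Adj u v)
    (a b c : V) (ha : a ∈ B) (hb : b ∈ B) (hc : c ∈ B)
    (hab : a ≠ b) (hac : a ≠ c) (hbc : b ≠ c)
    (ha' : ∃ a' ∉ B, G.Adj a a') (hb' : ∃ b' ∉ B, G.Adj b b')
    (hc' : ∃ c' ∉ B, G.Adj c c') :
    ¬ G.gallai.IsAcyclic := by
  obtain ⟨a', ha'B, haa'⟩ := ha'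
  obtain ⟨b', hb'B, hbb'⟩ := hb'
  obtain ⟨c', hc'B, hcc'⟩ := hc'
  have hnadj {w u x : V} (hw : w ∉ B) (hu : u ∈ B) (hx : x ∈ B) (hwu : G.Adj u w)
      (hux : u ≠ x) : ¬ G.Adj w x :=
    fun hwx ↦ hux (hB.eq_of_adj_of_adj_of_notMem hcomplete hw hu hx hwu.symm hwx)
  exact not_isAcyclic_gallai_of_triangle (hcomplete a ha b hb hab) (hcomplete b hb c hc hbc)
    (hcomplete c hc a ha hac.symm) haa' hbb' hcc'
    (hnadj ha'B ha hb haa' hab) (hnadj ha'B ha hc haa' hac)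
    (hnadj hb'B hb hc hbb' hbc) (hnadj hb'B hb ha hbb' hab.symm)
    (hnadj hc'B hc ha hcc' hac.symm) (hnadj hc'B hc hb hcc' hbc.symm)

/-- If a complete block `B` of `G` contains three distinct cut-vertices each having a
neighbor outside `B`, then `Γ(G)` contains a cycle. -/
theorem stmt_16 {V : Type*} (G : SimpleGraph V) (B : Set V) (hB : G.IsBlock B)
    (hcomplete : ∀ u ∈ B, ∀ v ∈ B, u ≠ v → G.Adj u v)
    (a b c : V) (ha : a ∈ B) (hb : b ∈ B) (hc : c ∈ B)
    (hab : a ≠ b) (hac : a ≠ c) (hbc : b ≠ c)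
    (hca : G.IsCutVertex a) (hcb : G.IsCutVertex b) (hcc : G.IsCutVertex c)
    (ha' : ∃ a' ∉ B, G.Adj a a') (hb' : ∃ b' ∉ B, G.Adj b b')
    (hc' : ∃ c' ∉ B, G.Adj c c') :
    ¬ G.gallai.IsAcyclic :=
  stmt_16_general G B hB hcomplete a b c ha hb hc hab hac hbc ha' hb' hc'
end
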